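/- arXiv:2112.10533 — 3 statements merged into one kernel-verified Lean document; each statement's English description precedes it below -/
import Mathlib

section
/- Let n, d ≥ 1 and let f ∈ ℝ[x₁,…,xₙ] be a form of degree 2d. Let W ⊆ ℝ[x₁,…,xₙ]_d be an r-dimensional linear subspace admitting a basis p₁,…,p_r such that f = Σᵢ₌₁ʳ pᵢ². Then the Gram spectrahedron Gram(f) has a face F such that every point of the relative interior of F has image equal to W, and dim F = r(r+1)/2 − dim W². -/
open MvPolynomial Matrix

/-- A face of a convex set `S`: a convex subset `F ⊆ S` such that whenever a point
of `F` lies in the open segment between two points of `S`, both endpoints lie in `F`. -/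
def IsFace {E : Type*} [AddCommGroup E] [Module ℝ E] (S F : Set E) : Prop :=
  F ⊆ S ∧ Convex ℝ F ∧ ∀ x ∈ S, ∀ y ∈ S, ∀ t : ℝ, 0 < t → t < 1 →
    t • x + (1 - t) • y ∈ F → x ∈ F ∧ y ∈ F

/-!
Write `pₖ = Σᵢ Pₖᵢ mᵢ`. The rows of `P` are independent, so `P` has a right inverse, and
`A ↦ Pᵀ A P` maps the Gram spectrahedron of `f` with respect to `p` injectively onto
`F = {G ∈ Gram(f) | ker P ⊆ ker G}`. This is a face because two positive semidefinite matrices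
whose convex combination kills a vector both kill it. The spectrahedron with respect to `p`
contains the identity together with a neighbourhood of it in the affine space of symmetric
`A` with `Σ aₖₗ pₖ pₗ = f`, so `dim F` is the dimension of the kernel of `A ↦ Σ aₖₗ pₖ pₗ` on
symmetric `r × r` matrices, i.e. `r(r+1)/2 - dim W²`. Finally, a point `θ` of the relative
interior can be pushed slightly beyond `PᵀP ∈ F` inside `F`, which forces `ker θ = ker P`,
hence `range θ = range Pᵀ`, whose image in the polynomial ring is `W`.
-/

open Filter Topology in
theorem exists_add_smul_sub_mem_of_mem_intrinsicInterior {E : Type*} [AddCommGroup E]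
    [Module ℝ E] [TopologicalSpace E] [ContinuousAdd E] [ContinuousSMul ℝ E]
    {s : Set E} {x y : E} (hx : x ∈ intrinsicInterior ℝ s) (hy : y ∈ s) :
    ∃ t : ℝ, 0 < t ∧ x + t • (x - y) ∈ s := by
  obtain ⟨x, hx, rfl⟩ := hx
  have hline : ∀ t : ℝ, (x : E) + t • (x - y) ∈ affineSpan ℝ s := fun t => by
    simpa [vsub_eq_sub, vadd_eq_add, add_comm] using
      AffineSubspace.smul_vsub_vadd_mem _ t x.2 (mem_affineSpan ℝ hy) x.2
  let γ : ℝ → affineSpan ℝ s := fun t => ⟨x + t • (x - y), hline t⟩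
  have hγ : Continuous γ := by fun_prop
  have hnear : ∀ᶠ t in 𝓝[>] 0, γ t ∈ interior ((↑) ⁻¹' s) :=
    nhdsWithin_le_nhds <| hγ.continuousAt.preimage_mem_nhds <|
      isOpen_interior.mem_nhds (by simpa [γ] using hx)
  obtain ⟨t, hint, ht⟩ := (hnear.and self_mem_nhdsWithin).exists
  exact ⟨t, ht, interior_subset (s := ((↑) : affineSpan ℝ s → E) ⁻¹' s) hint⟩

theorem Submodule.finrank_inf_ker_add_finrank_map {K V V' : Type*} [DivisionRing K]
    [AddCommGroup V] [Module K V] [AddCommGroup V'] [Module K V'] (L : V →ₗ[K] V')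
    (S : Submodule K V) [FiniteDimensional K S] :
    Module.finrank K ↥(S ⊓ LinearMap.ker L) + Module.finrank K ↥(S.map L) =
      Module.finrank K S := by
  rw [← LinearMap.range_domRestrict, ← Submodule.map_comap_subtype, ← LinearMap.ker_domRestrict,
    ← (Submodule.equivMapOfInjective _ S.injective_subtype _).finrank_eq, add_comm]
  exact (L.domRestrict S).finrank_range_add_finrank_ker

theorem MvPolynomial.IsHomogeneous.mem_span_range {σ ι R : Type*} [CommSemiring R]
    {m : ι → MvPolynomial σ R} {d : ℕ}
    (hm : ∀ s : σ →₀ ℕ, (s.sum fun _ e => e) = d → ∃ k, m k = monomial s (1 : R))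
    {q : MvPolynomial σ R} (hq : q.IsHomogeneous d) :
    q ∈ Submodule.span R (Set.range m) := by
  rw [q.as_sum]
  refine Submodule.sum_mem _ fun t ht => ?_
  obtain ⟨k, hk⟩ := hm t (by simpa [Finsupp.weight_apply] using hq (mem_support_iff.1 ht))
  rw [← mul_one (coeff t q), ← smul_eq_mul, ← smul_monomial, ← hk]
  exact Submodule.smul_mem _ _ (Submodule.subset_span ⟨k, rfl⟩)

namespace Matrix

variable {ι κ K : Type*}

section Symmetric

variable [CommSemiring K]

variable (ι K) in
def symmetricSubmodule : Submodule K (Matrix ι ι K) where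
  carrier := {A | A.IsSymm}
  add_mem' := IsSymm.add
  zero_mem' := isSymm_zero
  smul_mem' c _ hA := hA.smul c

@[simp]
theorem mem_symmetricSubmodule {A : Matrix ι ι K} : A ∈ symmetricSubmodule ι K ↔ A.IsSymm :=
  Iff.rfl

variable (ι K) in
def symmetricSubmoduleEquivSym2 : symmetricSubmodule ι K ≃ₗ[K] (Sym2 ι → K) where
  toFun A := Sym2.lift ⟨A.1, fun i j => A.2.apply j i⟩
  map_add' A B := by ext z; induction z using Sym2.ind; rfl
  map_smul' c A := by ext z; induction z using Sym2.ind; rfl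
  invFun g := ⟨of fun i j => g s(i, j), IsSymm.ext fun i j => by simp [Sym2.eq_swap]⟩
  left_inv A := by ext; rfl
  right_inv g := by ext z; induction z using Sym2.ind; rfl

theorem finrank_symmetricSubmodule [Fintype ι] [StrongRankCondition K] :
    Module.finrank K (symmetricSubmodule ι K) = Fintype.card ι * (Fintype.card ι + 1) / 2 := by
  classical
  rw [(symmetricSubmoduleEquivSym2 ι K).finrank_eq, Module.finrank_fintype_fun_eq_card,
    Sym2.card, Nat.choose_two_right, Nat.mul_comm]
  simp

end Symmetric

section TransposeMulMul

variable [Fintype κ] [CommSemiring K]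

def transposeMulMul (P : Matrix κ ι K) : Matrix κ κ K →ₗ[K] Matrix ι ι K where
  toFun A := Pᵀ * A * P
  map_add' A B := by rw [Matrix.mul_add, Matrix.add_mul]
  map_smul' c A := by rw [Matrix.mul_smul, Matrix.smul_mul, RingHom.id_apply]

theorem transposeMulMul_apply (P : Matrix κ ι K) (A : Matrix κ κ K) :
    transposeMulMul P A = Pᵀ * A * P := rfl

theorem transpose_mul_mul_eq_sum (P : Matrix κ ι K) (B : Matrix κ κ K) :
    Pᵀ * B * P = ∑ k, ∑ l, B k l • vecMulVec (P k) (P l) := by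
  ext i j
  simp only [mul_apply, transpose_apply, Matrix.sum_apply, Matrix.smul_apply, vecMulVec_apply,
    smul_eq_mul, Finset.sum_mul]
  rw [Finset.sum_comm]
  exact Finset.sum_congr rfl fun k _ => Finset.sum_congr rfl fun l _ => by ring

end TransposeMulMul

section RightInverse

variable [Fintype ι] [Fintype κ] [Field K] [DecidableEq κ] {P : Matrix κ ι K}
  {R : Matrix ι κ K}

theorem exists_mul_eq_one_of_linearIndependent_row (hP : LinearIndependent K P.row) :
    ∃ R : Matrix ι κ K, P * R = 1 := by
  have hsurj : Function.Surjective P.mulVecLin := by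
    rw [← LinearMap.range_eq_top]
    refine Submodule.eq_top_of_finrank_eq ?_
    rw [← rank, hP.rank_matrix, Module.finrank_fintype_fun_eq_card]
  choose v hv using hsurj
  refine ⟨of fun i k => v (Pi.single k 1) i, ?_⟩
  ext k l
  simpa [mul_apply, mulVec, dotProduct, one_apply, Pi.single_apply, eq_comm] using
    congrFun (hv (Pi.single l 1)) k

theorem transposeMulMul_injective (hR : P * R = 1) :
    Function.Injective (transposeMulMul P) := by
  have hRP : Rᵀ * Pᵀ = 1 := by rw [← transpose_mul, hR, transpose_one]
  have hcancel : ∀ A : Matrix κ κ K, Rᵀ * (Pᵀ * A * P) * R = A := fun A => by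
    simp only [Matrix.mul_assoc, hR, ← Matrix.mul_assoc Rᵀ, hRP, Matrix.one_mul, Matrix.mul_one]
  intro A B h
  rw [← hcancel A, ← hcancel B]
  exact congrArg (Rᵀ * · * R) h

theorem eq_transpose_mul_mul_of_ker_le (hR : P * R = 1) {G : Matrix ι ι K} (hG : G.IsSymm)
    (hker : LinearMap.ker P.mulVecLin ≤ LinearMap.ker G.mulVecLin) :
    G = Pᵀ * (Rᵀ * G * R) * P := by
  classical
  have hGRP : G * (R * P) = G := by
    have hcol : ∀ v, G *ᵥ (R *ᵥ (P *ᵥ v)) = G *ᵥ v := fun v => by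
      have : P *ᵥ (R *ᵥ (P *ᵥ v) - v) = 0 := by
        rw [mulVec_sub, mulVec_mulVec, hR, one_mulVec, sub_self]
      simpa [mulVec_sub, sub_eq_zero] using hker this
    ext i j
    have := congrFun (hcol (Pi.single j 1)) i
    rw [mulVec_mulVec, mulVec_mulVec, mulVec_single_one, mulVec_single_one] at this
    simpa [Matrix.mul_assoc] using this
  have hPRG : Pᵀ * (Rᵀ * G) = G := by
    simpa [transpose_mul, hG.eq, Matrix.mul_assoc] using congrArg transpose hGRP
  calc G = Pᵀ * (Rᵀ * G) * (R * P) := by rw [hPRG, hGRP]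
    _ = Pᵀ * (Rᵀ * G * R) * P := by simp only [Matrix.mul_assoc]

theorem range_mulVecLin_eq_range_transpose_of_ker_eq (hR : P * R = 1) {A : Matrix ι ι K}
    (hA : A.IsSymm) (hker : LinearMap.ker A.mulVecLin = LinearMap.ker P.mulVecLin) :
    LinearMap.range A.mulVecLin = LinearMap.range Pᵀ.mulVecLin := by
  refine Submodule.eq_of_le_of_finrank_eq ?_ ?_
  · rw [eq_transpose_mul_mul_of_ker_le hR hA hker.ge, Matrix.mul_assoc, mulVecLin_mul]
    exact LinearMap.range_comp_le_range _ _
  · change A.rank = Pᵀ.rank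
    have hA := A.mulVecLin.finrank_range_add_finrank_ker
    have hP := P.mulVecLin.finrank_range_add_finrank_ker
    rw [hker] at hA
    rw [rank_transpose]
    unfold rank
    omega

end RightInverse

section PosSemidef

variable [Fintype ι]

theorem neg_mul_dotProduct_self_le (B : Matrix ι ι ℝ) (v : ι → ℝ) :
    -((∑ k, ∑ l, |B k l|) * (v ⬝ᵥ v)) ≤ v ⬝ᵥ B *ᵥ v := by
  have hsq : ∀ k, v k * v k ≤ v ⬝ᵥ v := fun k =>
    Finset.single_le_sum (f := fun i => v i * v i) (fun i _ => mul_self_nonneg _)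
      (Finset.mem_univ k)
  set S := v ⬝ᵥ v
  calc -((∑ k, ∑ l, |B k l|) * S) = ∑ k, ∑ l, -(|B k l| * S) := by
        simp only [Finset.sum_mul, Finset.sum_neg_distrib]
    _ ≤ ∑ k, ∑ l, v k * (B k l * v l) := by
        refine Finset.sum_le_sum fun k _ => Finset.sum_le_sum fun l _ => ?_
        have := hsq k
        have := hsq l
        rcases abs_cases (B k l) with ⟨h, _⟩ | ⟨h, _⟩ <;> rw [h] <;>
          nlinarith [sq_nonneg (v k + v l), sq_nonneg (v k - v l)]
    _ = v ⬝ᵥ B *ᵥ v := by simp only [dotProduct, mulVec, Finset.mul_sum]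

theorem exists_pos_posSemidef_one_add_smul [DecidableEq ι] {B : Matrix ι ι ℝ} (hB : B.IsSymm) :
    ∃ ε : ℝ, 0 < ε ∧ (1 + ε • B).PosSemidef := by
  set c := ∑ k, ∑ l, |B k l|
  have hc : 0 ≤ c := by positivity
  refine ⟨(1 + c)⁻¹, by positivity, .of_dotProduct_mulVec_nonneg ?_ fun v => ?_⟩
  · simpa [isHermitian_iff_isSymm] using isSymm_one.add (hB.smul _)
  · have hvv : 0 ≤ v ⬝ᵥ v := Finset.sum_nonneg fun i _ => mul_self_nonneg _
    have hBv := neg_mul_dotProduct_self_le B v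
    have hεc : (1 + c)⁻¹ * c ≤ 1 := by
      rw [inv_mul_le_iff₀ (by positivity)]
      linarith
    simp only [star_trivial, add_mulVec, one_mulVec, smul_mulVec, dotProduct_add,
      dotProduct_smul, smul_eq_mul]
    nlinarith [mul_le_mul_of_nonneg_left hBv (inv_nonneg.2 (by positivity : (0 : ℝ) ≤ 1 + c)),
      mul_le_mul_of_nonneg_right hεc hvv]

theorem PosSemidef.mulVec_eq_zero_of_smul_add_smul {x y : Matrix ι ι ℝ} (hx : x.PosSemidef)
    (hy : y.PosSemidef) {a b : ℝ} (ha : 0 < a) (hb : 0 ≤ b) {v : ι → ℝ}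
    (h : (a • x + b • y) *ᵥ v = 0) : x *ᵥ v = 0 := by
  have hsum : a * (v ⬝ᵥ x *ᵥ v) + b * (v ⬝ᵥ y *ᵥ v) = 0 := by
    simpa [add_mulVec, smul_mulVec, dotProduct_add, dotProduct_smul] using
      congrArg (v ⬝ᵥ ·) h
  have hx' : 0 ≤ v ⬝ᵥ x *ᵥ v := by simpa using hx.dotProduct_mulVec_nonneg v
  have hy' : 0 ≤ v ⬝ᵥ y *ᵥ v := by simpa using hy.dotProduct_mulVec_nonneg v
  refine (hx.dotProduct_mulVec_zero_iff v).1 ?_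
  simp only [star_trivial]
  nlinarith [mul_nonneg hb hy', mul_nonneg ha.le hx']

theorem isFace_setOf_ker_le {S : Set (Matrix ι ι ℝ)} (hS : Convex ℝ S)
    (hpsd : ∀ G ∈ S, G.PosSemidef) (V : Submodule ℝ (ι → ℝ)) :
    IsFace S {G ∈ S | V ≤ LinearMap.ker G.mulVecLin} := by
  refine ⟨fun G hG => hG.1, ?_, ?_⟩
  · rintro x ⟨hxS, hx⟩ y ⟨hyS, hy⟩ a b ha hb hab
    refine ⟨hS hxS hyS ha hb hab, fun v hv => ?_⟩
    simp [LinearMap.mem_ker.1 (hx hv), LinearMap.mem_ker.1 (hy hv)]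
  · rintro x hx y hy t ht0 ht1 ⟨-, hV⟩
    refine ⟨⟨hx, fun v hv => ?_⟩, ⟨hy, fun v hv => ?_⟩⟩
    · exact (hpsd x hx).mulVec_eq_zero_of_smul_add_smul (hpsd y hy) ht0 (b := 1 - t)
        (by linarith) (hV hv)
    · exact (hpsd y hy).mulVec_eq_zero_of_smul_add_smul (hpsd x hx) (a := 1 - t)
        (by linarith) ht0.le (by rw [add_comm]; exact hV hv)

theorem ker_le_ker_of_mem_intrinsicInterior {F : Set (Matrix ι ι ℝ)}
    (hpsd : ∀ G ∈ F, G.PosSemidef) {θ G : Matrix ι ι ℝ} (hθ : θ ∈ intrinsicInterior ℝ F)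
    (hG : G ∈ F) : LinearMap.ker θ.mulVecLin ≤ LinearMap.ker G.mulVecLin := by
  obtain ⟨t, ht, hz⟩ := exists_add_smul_sub_mem_of_mem_intrinsicInterior hθ hG
  intro v hv
  refine (hpsd G hG).mulVec_eq_zero_of_smul_add_smul (hpsd _ hz) ht zero_le_one ?_
  have : t • G + (1 : ℝ) • (θ + t • (θ - G)) = (1 + t) • θ := by module
  rw [this, smul_mulVec, show θ *ᵥ v = 0 from hv, smul_zero]

end PosSemidef

end Matrix

section GramForm

variable {ι κ K A : Type*} [Fintype ι] [Fintype κ] [CommRing K] [CommRing A] [Algebra K A]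

def gramForm (m : ι → A) : Matrix ι ι K →ₗ[K] A where
  toFun G := ∑ i, ∑ j, G i j • (m i * m j)
  map_add' G H := by simp only [Matrix.add_apply, add_smul, Finset.sum_add_distrib]
  map_smul' c G := by
    simp only [Matrix.smul_apply, smul_eq_mul, mul_smul, Finset.smul_sum, RingHom.id_apply]

theorem gramForm_apply (m : ι → A) (G : Matrix ι ι K) :
    gramForm m G = ∑ i, ∑ j, G i j • (m i * m j) := rfl

theorem gramForm_vecMulVec (m : ι → A) (x y : ι → K) :
    gramForm m (vecMulVec x y) =
      Fintype.linearCombination K m x * Fintype.linearCombination K m y := by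
  simp only [gramForm_apply, vecMulVec_apply, Fintype.linearCombination_apply,
    Finset.sum_mul_sum, smul_mul_smul_comm]

theorem gramForm_one [DecidableEq ι] (m : ι → A) :
    gramForm m (1 : Matrix ι ι K) = ∑ i, m i ^ 2 := by
  simp [gramForm_apply, one_apply, sq]

variable {m : ι → A} {p : κ → A} {P : Matrix κ ι K}

theorem gramForm_transposeMulMul (hP : ∀ k, Fintype.linearCombination K m (P k) = p k)
    (B : Matrix κ κ K) : gramForm m (transposeMulMul P B) = gramForm p B := by
  simp only [transposeMulMul_apply, transpose_mul_mul_eq_sum, map_sum, map_smul,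
    gramForm_vecMulVec, hP]
  rfl

theorem linearCombination_comp_mulVecLin_transpose
    (hP : ∀ k, Fintype.linearCombination K m (P k) = p k) :
    Fintype.linearCombination K m ∘ₗ Pᵀ.mulVecLin = Fintype.linearCombination K p := by
  refine LinearMap.ext fun y => ?_
  simp only [LinearMap.comp_apply, mulVecLin_apply, Fintype.linearCombination_apply, ← hP,
    mulVec, dotProduct, transpose_apply, Finset.sum_smul, Finset.smul_sum, smul_smul]
  rw [Finset.sum_comm]
  exact Finset.sum_congr rfl fun k _ => Finset.sum_congr rfl fun i _ => by rw [mul_comm]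

end GramForm

theorem map_gramForm_symmetricSubmodule {κ K A : Type*} [Fintype κ] [Field K] [CharZero K]
    [CommRing A] [Algebra K A] (p : κ → A) :
    (symmetricSubmodule κ K).map (gramForm p) = Submodule.span K
      {g | ∃ u ∈ Submodule.span K (Set.range p), ∃ v ∈ Submodule.span K (Set.range p),
        g = u * v} := by
  apply le_antisymm
  · rintro _ ⟨G, -, rfl⟩
    refine Submodule.sum_mem _ fun k _ => Submodule.sum_mem _ fun l _ =>
      Submodule.smul_mem _ _ ?_
    exact Submodule.subset_span ⟨p k, Submodule.subset_span ⟨k, rfl⟩, p l,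
      Submodule.subset_span ⟨l, rfl⟩, rfl⟩
  · rw [Submodule.span_le]
    rintro _ ⟨u, hu, v, hv, rfl⟩
    rw [← Fintype.range_linearCombination] at hu hv
    obtain ⟨x, rfl⟩ := hu
    obtain ⟨y, rfl⟩ := hv
    refine ⟨(2 : K)⁻¹ • (vecMulVec x y + vecMulVec y x), ?_, ?_⟩
    · simpa [transpose_vecMulVec] using (isSymm_add_transpose_self (vecMulVec x y)).smul (2 : K)⁻¹
    · simp only [map_smul, map_add, gramForm_vecMulVec]
      rw [mul_comm (Fintype.linearCombination K p y), ← two_smul K, smul_smul,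
        inv_mul_cancel₀ two_ne_zero, one_smul]

section GramSet

variable {ι κ A : Type*} [Fintype ι] [Fintype κ] [DecidableEq κ] [CommRing A] [Algebra ℝ A]

def gramSet (m : ι → A) (f : A) : Set (Matrix ι ι ℝ) := {G | G.PosSemidef ∧ gramForm m G = f}

theorem convex_gramSet (m : ι → A) (f : A) : Convex ℝ (gramSet m f) := by
  rintro x ⟨hx, hxf⟩ y ⟨hy, hyf⟩ a b ha hb hab
  refine ⟨(hx.smul ha).add (hy.smul hb), ?_⟩
  rw [map_add, map_smul, map_smul, hxf, hyf, ← add_smul, hab, one_smul]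

variable {m : ι → A} {p : κ → A} {f : A} {P : Matrix κ ι ℝ} {R : Matrix ι κ ℝ}

theorem image_transposeMulMul_gramSet (hR : P * R = 1)
    (hP : ∀ k, Fintype.linearCombination ℝ m (P k) = p k) :
    transposeMulMul P '' gramSet p f =
      {G ∈ gramSet m f | LinearMap.ker P.mulVecLin ≤ LinearMap.ker G.mulVecLin} := by
  ext G
  constructor
  · rintro ⟨B, ⟨hB, hBf⟩, rfl⟩
    refine ⟨⟨?_, by rw [gramForm_transposeMulMul hP, hBf]⟩, fun v hv => ?_⟩
    · simpa [transposeMulMul_apply] using hB.conjTranspose_mul_mul_same P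
    · simp [transposeMulMul_apply, show P *ᵥ v = 0 from hv]
  · rintro ⟨⟨hG, hGf⟩, hker⟩
    have hGP := eq_transpose_mul_mul_of_ker_le hR (isHermitian_iff_isSymm.1 hG.isHermitian) hker
    refine ⟨Rᵀ * G * R, ⟨by simpa using hG.conjTranspose_mul_mul_same R, ?_⟩, hGP.symm⟩
    rw [← gramForm_transposeMulMul hP, transposeMulMul_apply, ← hGP, hGf]

theorem vectorSpan_gramSet (h1 : gramForm p (1 : Matrix κ κ ℝ) = f) :
    vectorSpan ℝ (gramSet p f) = symmetricSubmodule κ ℝ ⊓ LinearMap.ker (gramForm p) := by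
  apply le_antisymm
  · rw [vectorSpan_def, Submodule.span_le]
    rintro _ ⟨x, ⟨hx, hxf⟩, y, ⟨hy, hyf⟩, rfl⟩
    refine ⟨?_, by simp [vsub_eq_sub, hxf, hyf]⟩
    exact (isHermitian_iff_isSymm.1 hx.isHermitian).sub (isHermitian_iff_isSymm.1 hy.isHermitian)
  · rintro B ⟨hB, hBker⟩
    obtain ⟨ε, hε, hpsd⟩ := exists_pos_posSemidef_one_add_smul hB
    have hmem : (1 + ε • B) -ᵥ 1 ∈ vectorSpan ℝ (gramSet p f) :=
      vsub_mem_vectorSpan ℝ ⟨hpsd, by simp [h1, show gramForm p B = 0 from hBker]⟩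
        ⟨PosSemidef.one, h1⟩
    rw [vsub_eq_sub, add_sub_cancel_left] at hmem
    simpa [hε.ne'] using Submodule.smul_mem _ ε⁻¹ hmem

theorem finrank_vectorSpan_image_transposeMulMul_gramSet (hR : P * R = 1)
    (h1 : gramForm p (1 : Matrix κ κ ℝ) = f) :
    Module.finrank ℝ (vectorSpan ℝ (transposeMulMul P '' gramSet p f)) =
      Module.finrank ℝ ↥(symmetricSubmodule κ ℝ ⊓ LinearMap.ker (gramForm p)) := by
  have hmap := (transposeMulMul P).toAffineMap.map_vectorSpan (s := gramSet p f)
  rw [LinearMap.coe_toAffineMap, LinearMap.toAffineMap_linear] at hmap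
  rw [← hmap, ← vectorSpan_gramSet h1]
  exact (Submodule.equivMapOfInjective _ (transposeMulMul_injective hR) _).finrank_eq.symm

theorem range_linearCombination_comp_mulVecLin_of_mem_intrinsicInterior (hR : P * R = 1)
    (hP : ∀ k, Fintype.linearCombination ℝ m (P k) = p k)
    (h1 : gramForm p (1 : Matrix κ κ ℝ) = f) {θ : Matrix ι ι ℝ}
    (hθ : θ ∈ intrinsicInterior ℝ (transposeMulMul P '' gramSet p f)) :
    LinearMap.range (Fintype.linearCombination ℝ m ∘ₗ θ.mulVecLin) =
      Submodule.span ℝ (Set.range p) := by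
  have hF := image_transposeMulMul_gramSet (f := f) hR hP
  have hpsd : ∀ G ∈ transposeMulMul P '' gramSet p f, G.PosSemidef := fun G hG => (hF ▸ hG).1.1
  have hPP : Pᵀ * P ∈ transposeMulMul P '' gramSet p f :=
    ⟨1, ⟨.one, h1⟩, by rw [transposeMulMul_apply, Matrix.mul_one]⟩
  have hθF := hF ▸ intrinsicInterior_subset hθ
  have hker : LinearMap.ker θ.mulVecLin = LinearMap.ker P.mulVecLin :=
    le_antisymm ((ker_le_ker_of_mem_intrinsicInterior hpsd hθ hPP).trans_eq
      (ker_mulVecLin_transpose_mul_self P)) hθF.2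
  rw [LinearMap.range_comp, range_mulVecLin_eq_range_transpose_of_ker_eq hR
      (isHermitian_iff_isSymm.1 hθF.1.1.isHermitian) hker, ← LinearMap.range_comp,
    linearCombination_comp_mulVecLin_transpose hP, Fintype.range_linearCombination]

end GramSet

theorem face_with_prescribed_image_general
    (n d N : ℕ)
    -- `m` enumerates the monomial basis of `ℝ[x₁,…,xₙ]_d`
    (m : Fin N → MvPolynomial (Fin n) ℝ)
    (hm_surj : ∀ s : Fin n →₀ ℕ, (s.sum fun _ e => e) = d →
      ∃ k, m k = monomial s (1 : ℝ))
    -- `f` is a form of degree `2d`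
    (f : MvPolynomial (Fin n) ℝ)
    -- `W` is an `r`-dimensional subspace of `ℝ[x₁,…,xₙ]_d` with a basis
    -- `p₁,…,p_r` such that `f = Σ pᵢ²`
    (r : ℕ) (W : Submodule ℝ (MvPolynomial (Fin n) ℝ))
    (hW_hom : ∀ p ∈ W, p.IsHomogeneous d)
    (p : Fin r → MvPolynomial (Fin n) ℝ)
    (hp_li : LinearIndependent ℝ p)
    (hp_span : Submodule.span ℝ (Set.range p) = W)
    (hfp : f = ∑ i, p i ^ 2)
    -- the Gram spectrahedron of `f`
    (Gram : Set (Matrix (Fin N) (Fin N) ℝ))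
    (hGram : Gram = {G | G.PosSemidef ∧
      (∑ i, ∑ j, MvPolynomial.C (G i j) * (m i * m j)) = f})
    -- `W²` is the span of all products of two elements of `W`
    (W2 : Submodule ℝ (MvPolynomial (Fin n) ℝ))
    (hW2 : W2 = Submodule.span ℝ {g | ∃ u ∈ W, ∃ v ∈ W, g = u * v}) :
    ∃ F : Set (Matrix (Fin N) (Fin N) ℝ), IsFace Gram F ∧
      (∀ θ ∈ intrinsicInterior ℝ F,
        Submodule.span ℝ
          {q | ∃ c : Fin N → ℝ, q = ∑ i, ∑ j, (θ i j * c j) • m i} = W) ∧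
      Module.finrank ℝ (vectorSpan ℝ F) =
        r * (r + 1) / 2 - Module.finrank ℝ W2 := by
  have hpm : ∀ k, p k ∈ LinearMap.range (Fintype.linearCombination ℝ m) := fun k => by
    rw [Fintype.range_linearCombination]
    exact (hW_hom _ (hp_span ▸ Submodule.subset_span ⟨k, rfl⟩)).mem_span_range hm_surj
  obtain ⟨P, hP⟩ : ∃ P : Matrix (Fin r) (Fin N) ℝ,
      ∀ k, Fintype.linearCombination ℝ m (P k) = p k := by
    choose P hP using hpm
    exact ⟨P, hP⟩
  obtain ⟨R, hR⟩ := exists_mul_eq_one_of_linearIndependent_row (P := P) <|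
    .of_comp (Fintype.linearCombination ℝ m) <| by
      rwa [show ⇑(Fintype.linearCombination ℝ m) ∘ P.row = p from funext hP]
  have hGram' : Gram = gramSet m f := by simp only [hGram, C_mul', gramSet, gramForm_apply]
  have hone : gramForm p (1 : Matrix (Fin r) (Fin r) ℝ) = f := by rw [gramForm_one, hfp]
  refine ⟨transposeMulMul P '' gramSet p f, ?_, fun θ hθ => ?_, ?_⟩
  · rw [image_transposeMulMul_gramSet hR hP, hGram']
    exact isFace_setOf_ker_le (convex_gramSet m f) (fun G hG => hG.1) _
  · have himage : {q | ∃ c : Fin N → ℝ, q = ∑ i, ∑ j, (θ i j * c j) • m i} =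
        LinearMap.range (Fintype.linearCombination ℝ m ∘ₗ θ.mulVecLin) := by
      ext q
      simp [Fintype.linearCombination_apply, mulVec, dotProduct, Finset.sum_smul, eq_comm]
    rw [himage, Submodule.span_eq, ← hp_span,
      range_linearCombination_comp_mulVecLin_of_mem_intrinsicInterior hR hP hone hθ]
  · have hdim := Submodule.finrank_inf_ker_add_finrank_map (gramForm p)
      (symmetricSubmodule (Fin r) ℝ)
    rw [map_gramForm_symmetricSubmodule, hp_span, ← hW2, finrank_symmetricSubmodule,
      Fintype.card_fin] at hdim
    rw [finrank_vectorSpan_image_transposeMulMul_gramSet hR hone]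
    omega

/-- If `W ⊆ ℝ[x₁,…,xₙ]_d` is an `r`-dimensional subspace with a basis `p₁,…,p_r`
such that `f = Σ pᵢ²`, then `Gram(f)` has a face `F` all of whose relative interior
points have image `W`, and `dim F = r(r+1)/2 - dim W²`. -/
theorem face_with_prescribed_image
    (n d N : ℕ) (hn : 1 ≤ n) (hd : 1 ≤ d)
    -- `m` enumerates the monomial basis of `ℝ[x₁,…,xₙ]_d`
    (m : Fin N → MvPolynomial (Fin n) ℝ)
    (hm_inj : Function.Injective m)
    (hm_mono : ∀ k, ∃ s : Fin n →₀ ℕ,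
      (s.sum fun _ e => e) = d ∧ m k = monomial s (1 : ℝ))
    (hm_surj : ∀ s : Fin n →₀ ℕ, (s.sum fun _ e => e) = d →
      ∃ k, m k = monomial s (1 : ℝ))
    -- `f` is a form of degree `2d`
    (f : MvPolynomial (Fin n) ℝ) (hf : f.IsHomogeneous (2 * d))
    -- `W` is an `r`-dimensional subspace of `ℝ[x₁,…,xₙ]_d` with a basis
    -- `p₁,…,p_r` such that `f = Σ pᵢ²`
    (r : ℕ) (W : Submodule ℝ (MvPolynomial (Fin n) ℝ))
    (hW_hom : ∀ p ∈ W, p.IsHomogeneous d)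
    (p : Fin r → MvPolynomial (Fin n) ℝ)
    (hp_li : LinearIndependent ℝ p)
    (hp_span : Submodule.span ℝ (Set.range p) = W)
    (hfp : f = ∑ i, p i ^ 2)
    -- the Gram spectrahedron of `f`
    (Gram : Set (Matrix (Fin N) (Fin N) ℝ))
    (hGram : Gram = {G | G.PosSemidef ∧
      (∑ i, ∑ j, MvPolynomial.C (G i j) * (m i * m j)) = f})
    -- `W²` is the span of all products of two elements of `W`
    (W2 : Submodule ℝ (MvPolynomial (Fin n) ℝ))
    (hW2 : W2 = Submodule.span ℝ {g | ∃ u ∈ W, ∃ v ∈ W, g = u * v}) :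
    ∃ F : Set (Matrix (Fin N) (Fin N) ℝ), IsFace Gram F ∧
      (∀ θ ∈ intrinsicInterior ℝ F,
        Submodule.span ℝ
          {q | ∃ c : Fin N → ℝ, q = ∑ i, ∑ j, (θ i j * c j) • m i} = W) ∧
      Module.finrank ℝ (vectorSpan ℝ F) =
        r * (r + 1) / 2 - Module.finrank ℝ W2 :=
  face_with_prescribed_image_general n d N m hm_surj f r W hW_hom p hp_li hp_span hfp Gram hGram W2
    hW2
end

section
/- Let U be a linear subspace of dimension 5 (codimension 1) of the 6-dimensional space ℂ[x,y,z]₂ of homogeneous quadratic forms. If the forms in U have a common zero in ℂ³ ∖ {0}, then the codimension of U² in the 15-dimensional space ℂ[x,y,z]₄ is exactly 3, i.e., dim U² = 12. -/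
open MvPolynomial

namespace CodimAuxQ

open Module Submodule Pointwise

noncomputable section

def toF (v : Fin 3 → ℕ) : Fin 3 →₀ ℕ := Finsupp.equivFunOnFinite.symm v

@[simp] lemma toF_apply (v : Fin 3 → ℕ) (i : Fin 3) : toF v i = v i := rfl

lemma toF_injective : Function.Injective toF := Finsupp.equivFunOnFinite.symm.injective

lemma toF_add (u v : Fin 3 → ℕ) : toF (u + v) = toF u + toF v := by
  ext i; simp [toF]

def cpt : Fin 3 → ℂ := ![0, 0, 1]

lemma cpt_apply (m : Fin 3) : cpt m = if m = 2 then 1 else 0 := by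
  fin_cases m <;> simp [cpt]

def Vq : Fin 5 → (Fin 3 → ℕ) := ![![2,0,0],![1,1,0],![0,2,0],![1,0,1],![0,1,1]]

def V12 : Fin 12 → (Fin 3 → ℕ) :=
  ![![4,0,0],![3,1,0],![2,2,0],![1,3,0],![0,4,0],![3,0,1],
    ![2,1,1],![1,2,1],![0,3,1],![2,0,2],![1,1,2],![0,2,2]]

def mq (i : Fin 5) : MvPolynomial (Fin 3) ℂ := monomial (toF (Vq i)) 1

def m12 (i : Fin 12) : MvPolynomial (Fin 3) ℂ := monomial (toF (V12 i)) 1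

lemma indep {n : ℕ} (V : Fin n → Fin 3 → ℕ) (hV : Function.Injective V) :
    LinearIndependent ℂ (fun i => (monomial (toF (V i)) (1:ℂ))) := by
  have h := (MvPolynomial.basisMonomials (Fin 3) ℂ).linearIndependent.comp
      (toF ∘ V) (toF_injective.comp hV)
  simpa [Function.comp_def, MvPolynomial.coe_basisMonomials] using h

lemma finrank_span_monomials {n : ℕ} (V : Fin n → Fin 3 → ℕ) (hV : Function.Injective V) :
    finrank ℂ (span ℂ (Set.range fun i => monomial (toF (V i)) (1:ℂ))) = n := by
  rw [finrank_span_eq_card (indep V hV), Fintype.card_fin]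

lemma finrank_span_mq : finrank ℂ (span ℂ (Set.range mq)) = 5 :=
  finrank_span_monomials Vq (by decide)

lemma finrank_span_m12 : finrank ℂ (span ℂ (Set.range m12)) = 12 :=
  finrank_span_monomials V12 (by decide)

lemma classify (d : Fin 3 →₀ ℕ) (h : d 0 + d 1 + d 2 = 2) :
    d = toF ![0,0,2] ∨ ∃ i, d = toF (Vq i) := by
  have hd : d = toF ![d 0, d 1, d 2] := by
    ext i; fin_cases i <;> simp
  have h' : (d 0 = 2 ∧ d 1 = 0 ∧ d 2 = 0) ∨ (d 0 = 1 ∧ d 1 = 1 ∧ d 2 = 0) ∨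
      (d 0 = 0 ∧ d 1 = 2 ∧ d 2 = 0) ∨ (d 0 = 1 ∧ d 1 = 0 ∧ d 2 = 1) ∨
      (d 0 = 0 ∧ d 1 = 1 ∧ d 2 = 1) ∨ (d 0 = 0 ∧ d 1 = 0 ∧ d 2 = 2) := by omega
  rcases h' with ⟨h0,h1,h2⟩|⟨h0,h1,h2⟩|⟨h0,h1,h2⟩|⟨h0,h1,h2⟩|⟨h0,h1,h2⟩|⟨h0,h1,h2⟩ <;>
    rw [h0, h1, h2] at hd
  · exact Or.inr ⟨0, hd.trans (congrArg toF (by decide))⟩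
  · exact Or.inr ⟨1, hd.trans (congrArg toF (by decide))⟩
  · exact Or.inr ⟨2, hd.trans (congrArg toF (by decide))⟩
  · exact Or.inr ⟨3, hd.trans (congrArg toF (by decide))⟩
  · exact Or.inr ⟨4, hd.trans (congrArg toF (by decide))⟩
  · exact Or.inl (hd.trans (congrArg toF (by decide)))

lemma mem_span_mq (p : MvPolynomial (Fin 3) ℂ) (hp : p.IsHomogeneous 2)
    (he : eval cpt p = 0) : p ∈ span ℂ (Set.range mq) := by
  have hclass : ∀ d ∈ p.support, d = toF ![0,0,2] ∨ ∃ i, d = toF (Vq i) := by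
    intro d hd
    apply classify
    have h2 := hp (mem_support_iff.mp hd)
    rw [Finsupp.weight_apply, Finsupp.sum_fintype] at h2
    · simpa [Fin.sum_univ_three] using h2
    · intro i; simp
  have hkey : coeff (toF ![0,0,2]) p = 0 := by
    have hsum : eval cpt p = ∑ d ∈ p.support, if d = toF ![0,0,2] then coeff d p else 0 := by
      rw [eval_eq']
      refine Finset.sum_congr rfl fun d hd => ?_
      rcases hclass d hd with h | ⟨i, h⟩
      · subst h
        rw [if_pos rfl]
        simp [Fin.prod_univ_three, cpt]
      · subst h
        have hne : toF (Vq i) ≠ toF ![0,0,2] := fun hcon => by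
          have h3 := toF_injective hcon
          revert h3; fin_cases i <;> decide
        rw [if_neg hne]
        have hz : (∏ j, cpt j ^ (toF (Vq i)) j) = 0 := by
          fin_cases i <;> norm_num [Fin.prod_univ_three, cpt, Vq]
        rw [hz, mul_zero]
    rw [Finset.sum_ite_eq' p.support _ (fun d => coeff d p), he] at hsum
    by_cases hmem : toF ![0,0,2] ∈ p.support
    · rw [if_pos hmem] at hsum; exact hsum.symm
    · exact notMem_support_iff.mp hmem
  rw [p.as_sum]
  apply Submodule.sum_mem
  intro d hd
  rcases hclass d hd with h | ⟨i, h⟩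
  · subst h; rw [hkey]; simp
  · subst h
    have hsm : (monomial (toF (Vq i))) (coeff (toF (Vq i)) p)
        = (coeff (toF (Vq i)) p) • mq i := by
      simp [mq, smul_monomial]
    rw [hsm]
    exact Submodule.smul_mem _ _ (subset_span ⟨i, rfl⟩)

lemma range_mul : (Set.range mq) * (Set.range mq) = Set.range m12 := by
  have h1 : ∀ ij : Fin 5 × Fin 5, ∃ l : Fin 12, V12 l = Vq ij.1 + Vq ij.2 := by decide
  have h2 : ∀ l : Fin 12, ∃ ij : Fin 5 × Fin 5, Vq ij.1 + Vq ij.2 = V12 l := by decide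
  ext g
  simp only [Set.mem_mul, Set.mem_range]
  constructor
  · rintro ⟨x, ⟨i, rfl⟩, y, ⟨j, rfl⟩, rfl⟩
    obtain ⟨l, hl⟩ := h1 (i, j)
    exact ⟨l, by rw [m12, mq, mq, monomial_mul, one_mul, ← toF_add, ← hl]⟩
  · rintro ⟨l, rfl⟩
    obtain ⟨⟨i, j⟩, hij⟩ := h2 l
    exact ⟨mq i, ⟨i, rfl⟩, mq j, ⟨j, rfl⟩,
      by rw [mq, mq, m12, monomial_mul, one_mul, ← toF_add, hij]⟩

variable (a : Fin 3 → ℂ) (k : Fin 3)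

def lf : Fin 3 → MvPolynomial (Fin 3) ℂ := fun j =>
  if j = k then C (a k)⁻¹ * X k else X j - C (a j * (a k)⁻¹) * X k

def lf' : Fin 3 → MvPolynomial (Fin 3) ℂ := fun j =>
  if j = k then C (a k) * X k else X j + C (a j) * X k

lemma comp1 (hk : a k ≠ 0) (j : Fin 3) : aeval (lf a k) (lf' a k j) = X j := by
  have hC : (C (a k) * C ((a k)⁻¹) : MvPolynomial (Fin 3) ℂ) = 1 := by
    rw [← C_mul, mul_inv_cancel₀ hk, C_1]
  by_cases hj : j = k
  · simp only [lf', if_pos hj, eq_self_iff_true, if_true, map_mul, aeval_C, aeval_X, lf,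
      if_pos rfl, eq_self_iff_true, if_true, algebraMap_eq, hj]
    linear_combination (X k : MvPolynomial (Fin 3) ℂ) * hC
  · simp only [lf', if_neg hj, map_add, map_mul, aeval_C, aeval_X, lf,
      if_pos rfl, eq_self_iff_true, if_true, if_neg hj, algebraMap_eq, C_mul]
    ring

lemma comp2 (hk : a k ≠ 0) (j : Fin 3) : aeval (lf' a k) (lf a k j) = X j := by
  have hC : (C (a k) * C ((a k)⁻¹) : MvPolynomial (Fin 3) ℂ) = 1 := by
    rw [← C_mul, mul_inv_cancel₀ hk, C_1]
  by_cases hj : j = k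
  · simp only [lf, if_pos hj, eq_self_iff_true, if_true, map_mul, aeval_C, aeval_X, lf',
      if_pos rfl, eq_self_iff_true, if_true, algebraMap_eq, hj]
    linear_combination (X k : MvPolynomial (Fin 3) ℂ) * hC
  · simp only [lf, if_neg hj, map_sub, map_mul, aeval_C, aeval_X, lf',
      if_pos rfl, eq_self_iff_true, if_true, if_neg hj, algebraMap_eq, C_mul]
    linear_combination (-(C (a j) * X k) : MvPolynomial (Fin 3) ℂ) * hC

def Beq (hk : a k ≠ 0) : MvPolynomial (Fin 3) ℂ ≃ₐ[ℂ] MvPolynomial (Fin 3) ℂ :=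
  AlgEquiv.ofAlgHom (aeval (lf' a k)) (aeval (lf a k))
    (algHom_ext fun j => by
      simp only [AlgHom.comp_apply, aeval_X, AlgHom.id_apply]
      exact comp2 a k hk j)
    (algHom_ext fun j => by
      simp only [AlgHom.comp_apply, aeval_X, AlgHom.id_apply]
      exact comp1 a k hk j)

def phi (hk : a k ≠ 0) : MvPolynomial (Fin 3) ℂ ≃ₐ[ℂ] MvPolynomial (Fin 3) ℂ :=
  (Beq a k hk).trans (renameEquiv ℂ (Equiv.swap k 2))

lemma phi_apply (hk : a k ≠ 0) (p : MvPolynomial (Fin 3) ℂ) :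
    phi a k hk p = rename (Equiv.swap k 2) (aeval (lf' a k) p) := rfl

lemma swap_ne (j : Fin 3) (hj : j ≠ k) : Equiv.swap k 2 j ≠ 2 := by
  intro h
  exact hj (by simpa using congrArg (Equiv.swap k 2) h)

lemma phi_eval (hk : a k ≠ 0) (p : MvPolynomial (Fin 3) ℂ) :
    eval cpt (phi a k hk p) = eval a p := by
  rw [phi_apply, eval_rename]
  have h0 : eval (cpt ∘ (Equiv.swap k 2)) (aeval (lf' a k) p)
      = aeval (cpt ∘ (Equiv.swap k 2)) (aeval (lf' a k) p) := rfl
  rw [h0, comp_aeval_apply]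
  have h1 : (fun i => aeval (R := ℂ) (cpt ∘ (Equiv.swap k 2)) (lf' a k i)) = a := by
    funext j
    by_cases hj : j = k
    · simp only [lf', if_pos hj, eq_self_iff_true, if_true, map_mul, aeval_C, aeval_X,
        Function.comp_apply, Equiv.swap_apply_left, Algebra.algebraMap_self_apply, hj]
      rw [cpt_apply]
      simp
    · simp only [lf', if_neg hj, map_add, map_mul, aeval_C, aeval_X, Function.comp_apply,
        Equiv.swap_apply_left, Algebra.algebraMap_self_apply]
      rw [cpt_apply, if_neg (swap_ne k j hj), cpt_apply]
      norm_num
  rw [h1]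
  rfl

lemma phi_hom (hk : a k ≠ 0) (p : MvPolynomial (Fin 3) ℂ) (hp : p.IsHomogeneous 2) :
    (phi a k hk p).IsHomogeneous 2 := by
  rw [phi_apply]
  apply MvPolynomial.IsHomogeneous.rename_isHomogeneous
  have h1 : ∀ j, (lf' a k j).IsHomogeneous 1 := by
    intro j
    by_cases hj : j = k
    · simp only [lf', if_pos hj]
      exact (isHomogeneous_X ℂ k).C_mul _
    · simp only [lf', if_neg hj]
      exact (isHomogeneous_X ℂ j).add ((isHomogeneous_X ℂ k).C_mul _)
  simpa using hp.aeval (lf' a k) h1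

end

end CodimAuxQ

/-- If `U ⊆ ℂ[x,y,z]₂` is a subspace of dimension 5 (codimension 1) whose forms
have a common zero in `ℂ³ ∖ {0}`, then the codimension of `U²` in `ℂ[x,y,z]₄`
is exactly 3, i.e. `dim U² = 12`. -/
theorem codim_one_square_with_basepoint
    (U : Submodule ℂ (MvPolynomial (Fin 3) ℂ))
    (hU_hom : ∀ p ∈ U, p.IsHomogeneous 2)
    (hU_dim : Module.finrank ℂ U = 5)
    (hbp : ∃ a : Fin 3 → ℂ, a ≠ 0 ∧ ∀ p ∈ U, eval a p = 0)
    (U2 : Submodule ℂ (MvPolynomial (Fin 3) ℂ))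
    (hU2 : U2 = Submodule.span ℂ {g | ∃ p ∈ U, ∃ q ∈ U, g = p * q}) :
    Module.finrank ℂ U2 = 12 := by
  classical
  obtain ⟨a, ha0, haU⟩ := hbp
  obtain ⟨k, hk⟩ : ∃ k, a k ≠ 0 := by
    by_contra h
    push_neg at h
    exact ha0 (funext h)
  set φ := CodimAuxQ.phi a k hk with hφ
  set e : MvPolynomial (Fin 3) ℂ ≃ₗ[ℂ] MvPolynomial (Fin 3) ℂ := φ.toLinearEquiv with he
  have htl : (e : MvPolynomial (Fin 3) ℂ →ₗ[ℂ] MvPolynomial (Fin 3) ℂ)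
      = φ.toAlgHom.toLinearMap := rfl
  set W := Submodule.span ℂ (Set.range CodimAuxQ.mq) with hW
  haveI : FiniteDimensional ℂ W := FiniteDimensional.span_of_finite ℂ (Set.finite_range _)
  have hUle : U.map (e : MvPolynomial (Fin 3) ℂ →ₗ[ℂ] MvPolynomial (Fin 3) ℂ) ≤ W := by
    rintro x hx
    rw [Submodule.mem_map] at hx
    obtain ⟨p, hp, rfl⟩ := hx
    refine CodimAuxQ.mem_span_mq _ (CodimAuxQ.phi_hom a k hk _ (hU_hom p hp)) ?_
    show eval CodimAuxQ.cpt (φ p) = 0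
    rw [CodimAuxQ.phi_eval a k hk]
    exact haU p hp
  have hUeq : U.map (e : MvPolynomial (Fin 3) ℂ →ₗ[ℂ] MvPolynomial (Fin 3) ℂ) = W := by
    apply Submodule.eq_of_le_of_finrank_le hUle
    rw [CodimAuxQ.finrank_span_mq, LinearEquiv.finrank_map_eq e U, hU_dim]
  have hU2eq : U2 = U * U := by
    rw [hU2, Submodule.mul_def]
    congr 1
    ext g
    simp only [Set.mem_mul, Set.mem_setOf_eq, SetLike.mem_coe]
    constructor
    · rintro ⟨p, hp, q, hq, rfl⟩
      exact ⟨p, hp, q, hq, rfl⟩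
    · rintro ⟨p, hp, q, hq, rfl⟩
      exact ⟨p, hp, q, hq, rfl⟩
  have hmap : U2.map (e : MvPolynomial (Fin 3) ℂ →ₗ[ℂ] MvPolynomial (Fin 3) ℂ)
      = Submodule.span ℂ (Set.range CodimAuxQ.m12) := by
    rw [hU2eq, htl, Submodule.map_mul U U φ.toAlgHom, ← htl, hUeq, hW,
      Submodule.span_mul_span, CodimAuxQ.range_mul]
  have hfr : Module.finrank ℂ U2
      = Module.finrank ℂ (U2.map (e : MvPolynomial (Fin 3) ℂ →ₗ[ℂ] MvPolynomial (Fin 3) ℂ)) :=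
    (LinearEquiv.finrank_map_eq e U2).symm
  rw [hfr, hmap, CodimAuxQ.finrank_span_m12]
end

section
/- Let f ∈ ℝ[x,y,z] be a smooth ternary quartic. Then at most four bitangents of f can intersect in a common point: there do not exist five pairwise non-proportional bitangents l₁,…,l₅ of f and a nonzero point P ∈ ℂ³ with l₁(P) = l₂(P) = l₃(P) = l₄(P) = l₅(P) = 0. -/
/-!
Let `P` be the common point of the five bitangents and `F` the complexified quartic. If
`F = q² + h·l` with `l(P) = 0`, then modulo `l` we get `F(X + tP) ≡ Q(t)²`, where `Q(t) = q(X + tP)`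
is quadratic in `t`. Writing `F(X + tP) = ∑ Aₖ tᵏ` (so `A₀ = F`, `A₄ = F(P)` and `Aₖ` is a form of
degree `4 - k`), the coefficients of a square of a quadratic satisfy `64 A₄³ A₀ = (4 A₄ A₂ - A₃²)²`.
Hence the quartic form `64 F(P)³ F - (4 F(P) A₂ - A₃²)²` is divisible by five pairwise
non-associated linear forms, so it is zero. If `F(P) ≠ 0`, then `F` is a constant times the square
of the conic `4 F(P) A₂ - A₃²` and is singular at every point of that conic. If `F(P) = 0`, then
modulo each `l` we have `F(P + tX) ≡ R(t)²` with `R(0)² = F(P) = 0`, so the coefficient of `t`, the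
tangent form `∑ ∂ᵢF(P) Xᵢ`, is divisible by the five lines; it vanishes and `P` is singular.
-/

open MvPolynomial

/-- `f` is smooth: no nonzero complex point at which all partial derivatives of the
complexification of `f` vanish. -/
def IsSmooth (f : MvPolynomial (Fin 3) ℝ) : Prop :=
  ∀ a : Fin 3 → ℂ,
    (∀ i, eval a (pderiv i (map (algebraMap ℝ ℂ) f)) = 0) → a = 0

/-- A bitangent of `f`: a nonzero complex linear form `l` such that
`f = q² + h·l` for some forms `q` of degree 2 and `h` of degree 3. -/
def IsBitangent (f : MvPolynomial (Fin 3) ℝ) (l : MvPolynomial (Fin 3) ℂ) : Prop :=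
  l ≠ 0 ∧ l.IsHomogeneous 1 ∧ ∃ q h : MvPolynomial (Fin 3) ℂ,
    q.IsHomogeneous 2 ∧ h.IsHomogeneous 3 ∧
    map (algebraMap ℝ ℂ) f = q ^ 2 + h * l

theorem Finset.prod_dvd_of_prime_of_not_associated {ι M : Type*} [CommMonoidWithZero M]
    [IsCancelMulZero M] {l : ι → M} {n : M} (s : Finset ι) (hp : ∀ i ∈ s, Prime (l i))
    (hna : (s : Set ι).Pairwise fun i j => ¬Associated (l i) (l j))
    (hdvd : ∀ i ∈ s, l i ∣ n) : ∏ i ∈ s, l i ∣ n := by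
  classical
  induction s using Finset.induction_on with
  | empty => simp
  | insert a s ha ih =>
    simp only [Finset.mem_insert, forall_eq_or_imp, Finset.coe_insert] at hp hdvd hna
    obtain ⟨k, rfl⟩ := ih hp.2 (hna.mono (Set.subset_insert _ _)) hdvd.2
    have hak : l a ∣ k := by
      refine (hp.1.dvd_or_dvd hdvd.1).resolve_left fun hdvd' => ?_
      obtain ⟨j, hj, haj⟩ := (hp.1.dvd_finsetProd_iff l).mp hdvd'
      exact hna (Set.mem_insert a _) (Set.mem_insert_of_mem a hj) (fun h => ha (h ▸ hj))
        (hp.1.associated_of_dvd (hp.2 j hj) haj)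
    rw [Finset.prod_insert ha, mul_comm]
    exact mul_dvd_mul_left _ hak

namespace Polynomial

variable {R : Type*} [CommRing R]

theorem coeff_sq_zero (g : R[X]) : (g ^ 2).coeff 0 = g.coeff 0 ^ 2 := by
  rw [sq, mul_coeff_zero, sq]

theorem coeff_sq_one (g : R[X]) : (g ^ 2).coeff 1 = 2 * g.coeff 0 * g.coeff 1 := by
  rw [sq, coeff_mul, Finset.Nat.sum_antidiagonal_eq_sum_range_succ_mk]
  simp only [Nat.succ_eq_add_one, Nat.reduceAdd, Finset.sum_range_succ, Finset.range_one,
    Finset.sum_singleton, tsub_zero, tsub_self]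
  ring

-- If `g = b₀ + b₁ t + b₂ t²`, both sides equal `64 b₀² b₂⁶`.
theorem quartic_invariant_sq {g : R[X]} (hg : g.natDegree ≤ 2) :
    64 * (g ^ 2).coeff 4 ^ 3 * (g ^ 2).coeff 0 =
      (4 * (g ^ 2).coeff 4 * (g ^ 2).coeff 2 - (g ^ 2).coeff 3 ^ 2) ^ 2 := by
  have h3 : g.coeff 3 = 0 := coeff_eq_zero_of_natDegree_lt (by omega)
  have h4 : g.coeff 4 = 0 := coeff_eq_zero_of_natDegree_lt (by omega)
  simp only [sq g, coeff_mul, Finset.Nat.sum_antidiagonal_eq_sum_range_succ_mk,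
    Finset.sum_range_succ, Finset.sum_range_zero, h3, h4]
  ring

end Polynomial

namespace MvPolynomial

theorem aeval_C_comp {σ R : Type*} [CommSemiring R] (P : σ → R) (p : MvPolynomial σ R) :
    aeval (C ∘ P : σ → MvPolynomial σ R) p = C (eval P p) :=
  aeval_algebraMap_apply _ P p

section LineRestriction

variable {σ R S : Type*} [CommSemiring R] [CommSemiring S] [Algebra R S]

noncomputable def lineRestriction (y w : σ → S) : MvPolynomial σ R →ₐ[R] Polynomial S :=
  aeval fun i => Polynomial.C (y i) + Polynomial.C (w i) * Polynomial.X

variable (y w : σ → S) (p : MvPolynomial σ R)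

theorem map_lineRestriction {S' : Type*} [CommSemiring S'] [Algebra R S'] (φ : S →ₐ[R] S') :
    (lineRestriction y w p).map φ = lineRestriction (φ ∘ y) (φ ∘ w) p := by
  rw [← Polynomial.coe_mapAlgHom, lineRestriction, comp_aeval_apply]
  simp only [Polynomial.coe_mapAlgHom, Polynomial.map_add, Polynomial.map_mul, Polynomial.map_C,
    Polynomial.map_X]
  rfl

theorem eval_lineRestriction (t : S) :
    (lineRestriction y w p).eval t = aeval (fun i => y i + t * w i) p := by
  rw [← Polynomial.coe_aeval_eq_eval, ← AlgHom.coe_restrictScalars' R, lineRestriction,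
    comp_aeval_apply]
  simp only [AlgHom.coe_restrictScalars', Polynomial.coe_aeval_eq_eval, Polynomial.eval_add,
    Polynomial.eval_mul, Polynomial.eval_C, Polynomial.eval_X, mul_comm]

theorem coeff_zero_lineRestriction : (lineRestriction y w p).coeff 0 = aeval y p := by
  simp only [Polynomial.coeff_zero_eq_eval_zero, eval_lineRestriction, zero_mul, add_zero]

theorem coeff_one_lineRestriction [Fintype σ] :
    (lineRestriction y w p).coeff 1 = ∑ i, w i * aeval y (pderiv i p) := by
  classical
  induction p using MvPolynomial.induction_on with
  | C a => simp [lineRestriction]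
  | add p q hp hq =>
    simp only [map_add, Polynomial.coeff_add, hp, hq, mul_add, Finset.sum_add_distrib]
  | mul_X p j hp =>
    have hmul : (lineRestriction y w (p * X j)).coeff 1 =
        (lineRestriction y w p).coeff 0 * w j + (lineRestriction y w p).coeff 1 * y j := by
      simp [lineRestriction, mul_add, ← mul_assoc, Polynomial.coeff_mul_X, Polynomial.coeff_mul_C,
        add_comm]
    have hderiv (i : σ) : w i * aeval y (pderiv i (p * X j)) =
        w i * aeval y (pderiv i p) * y j + if i = j then aeval y p * w j else 0 := by
      by_cases h : i = j
      · subst h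
        simp only [Derivation.leibniz, pderiv_X, Pi.single_eq_same, smul_eq_mul, mul_one, map_add,
          map_mul, aeval_X, ↓reduceIte]
        ring
      · simp only [Derivation.leibniz, pderiv_X, Pi.single_eq_of_ne (Ne.symm h), smul_eq_mul,
          mul_zero, zero_add, map_mul, aeval_X, h, ↓reduceIte, add_zero]
        ring
    rw [hmul, hp, coeff_zero_lineRestriction, Finset.sum_congr rfl fun i _ => hderiv i,
      Finset.sum_add_distrib, Finset.sum_ite_eq', Finset.sum_mul, if_pos (Finset.mem_univ j),
      add_comm]

theorem lineRestriction_of_isHomogeneous_one {l : MvPolynomial σ R} (hl : l.IsHomogeneous 1) :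
    lineRestriction y w l =
      Polynomial.C (aeval y l) + Polynomial.C (aeval w l) * Polynomial.X := by
  rw [← mem_homogeneousSubmodule, homogeneousSubmodule_one_eq_span_X] at hl
  induction hl using Submodule.span_induction with
  | mem x hx =>
    obtain ⟨i, rfl⟩ := hx
    simp [lineRestriction]
  | zero => simp
  | add a b _ _ ha hb => simp only [map_add, ha, hb]; ring
  | smul c a _ ha =>
    simp only [map_smul, ha, smul_add, Polynomial.smul_C, ← smul_mul_assoc]

end LineRestriction

theorem map_mk_lineRestriction_eq_sq {σ R : Type*} [CommRing R] {F q l : MvPolynomial σ R}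
    (hl : l.IsHomogeneous 1) (hsq : l ∣ F - q ^ 2) {y w : σ → MvPolynomial σ R}
    (hy : l ∣ aeval y l) (hw : l ∣ aeval w l) :
    (lineRestriction y w F).map (Ideal.Quotient.mk (Ideal.span {l})) =
      (lineRestriction y w q).map (Ideal.Quotient.mk (Ideal.span {l})) ^ 2 := by
  obtain ⟨h, hh⟩ := hsq
  have hl0 : (lineRestriction y w l).map (Ideal.Quotient.mk (Ideal.span {l})) = 0 := by
    rw [lineRestriction_of_isHomogeneous_one y w hl, Polynomial.map_add, Polynomial.map_mul,
      Polynomial.map_C, Polynomial.map_C, (Ideal.Quotient.eq_zero_iff_dvd _ _).mpr hy,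
      (Ideal.Quotient.eq_zero_iff_dvd _ _).mpr hw]
    simp
  rw [show F = q ^ 2 + l * h by rw [← hh]; ring, map_add, map_pow, map_mul, Polynomial.map_add,
    Polynomial.map_mul, hl0, zero_mul, add_zero, Polynomial.map_pow]

section Homogeneous

variable {σ R : Type*} [CommSemiring R] (P : σ → R) {p : MvPolynomial σ R} {n : ℕ}

-- With `t` as an extra variable, `p (X + t • P)` is a form of the same degree as `p`; the facts
-- below about the coefficients in `t` are read off from this.
theorem lineRestriction_X_eq_optionEquivLeft (p : MvPolynomial σ R) :
    lineRestriction X (C ∘ P) p =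
      optionEquivLeft R σ (aeval (fun i => X (some i) + C (P i) * X none) p) := by
  rw [← AlgEquiv.coe_toAlgHom, comp_aeval_apply]
  simp [lineRestriction]

theorem IsHomogeneous.natDegree_lineRestriction_le (hp : p.IsHomogeneous n) :
    (lineRestriction X (C ∘ P) p).natDegree ≤ n := by
  rw [lineRestriction_X_eq_optionEquivLeft, natDegree_optionEquivLeft]
  refine (degreeOf_le_totalDegree _ _).trans (IsHomogeneous.totalDegree_le ?_)
  simpa using hp.aeval _ fun i => (isHomogeneous_X R (some i)).add
    ((isHomogeneous_C _ (P i)).mul (isHomogeneous_X R none))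

theorem IsHomogeneous.coeff_lineRestriction_isHomogeneous [Finite σ] (hp : p.IsHomogeneous n)
    {i j : ℕ} (h : i + j = n) : ((lineRestriction X (C ∘ P) p).coeff i).IsHomogeneous j := by
  refine coeff_isHomogeneous_of_optionEquivLeft_symm ?_ i j h
  rw [lineRestriction_X_eq_optionEquivLeft, AlgEquiv.symm_apply_apply]
  simpa using hp.aeval _ fun i => (isHomogeneous_X R (some i)).add
    ((isHomogeneous_C _ (P i)).mul (isHomogeneous_X R none))

theorem IsHomogeneous.coeff_lineRestriction_self [Finite σ] (hp : p.IsHomogeneous n) :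
    (lineRestriction X (C ∘ P) p).coeff n = C (eval P p) := by
  set g := lineRestriction X (C ∘ P) p
  have hconst : g.coeff n = C ((g.coeff n).coeff 0) :=
    totalDegree_eq_zero_iff_eq_C.mp <| (totalDegree_zero_iff_isHomogeneous _).mpr <|
      hp.coeff_lineRestriction_isHomogeneous P (add_zero n)
  rw [hconst]
  congr 1
  -- The other coefficients are forms of positive degree, so only the top one survives at
  -- `X = 0, t = 1`.
  have hlow (k : ℕ) (hk : k < n) : (g.coeff k).coeff 0 = 0 :=
    (hp.coeff_lineRestriction_isHomogeneous P (Nat.add_sub_of_le hk.le)).coeff_eq_zero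
      (by simpa using (Nat.sub_pos_of_lt hk).ne)
  have hg₀ : g.map (MvPolynomial.aeval (R := R) (0 : σ → R) : MvPolynomial σ R →+* R) =
      lineRestriction 0 P p := by
    rw [map_lineRestriction]
    congr <;> funext i <;> simp
  set g₀ := g.map (MvPolynomial.aeval (R := R) (0 : σ → R) : MvPolynomial σ R →+* R)
  have hdeg : g₀.natDegree < n + 1 :=
    Nat.lt_succ_of_le (Polynomial.natDegree_map_le.trans (hp.natDegree_lineRestriction_le P))
  calc (g.coeff n).coeff 0
      = ∑ k ∈ Finset.range (n + 1), (g.coeff k).coeff 0 := by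
        rw [Finset.sum_range_succ, Finset.sum_eq_zero fun k hk => hlow k (Finset.mem_range.mp hk),
          zero_add]
    _ = g₀.eval 1 := by
        rw [Polynomial.eval_eq_sum_range' hdeg]
        simp [g₀, constantCoeff_eq]
    _ = eval P p := by
        rw [hg₀, eval_lineRestriction]
        simp

end Homogeneous

section LinearForms

variable {σ K : Type*} [Field K]

theorem prime_of_isHomogeneous_one {l : MvPolynomial σ K} (hl : l.IsHomogeneous 1)
    (hl0 : l ≠ 0) : Prime l := by
  refine (irreducible_of_totalDegree_eq_one (hl.totalDegree hl0) fun x hx => ?_).prime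
  obtain ⟨d, hd⟩ := ne_zero_iff.mp hl0
  exact isUnit_iff_ne_zero.mpr fun hx0 => hd (zero_dvd_iff.mp (hx0 ▸ hx d))

theorem exists_smul_eq_of_associated {p q : MvPolynomial σ K} (h : Associated p q) :
    ∃ c : K, q = c • p := by
  obtain ⟨u, rfl⟩ := h
  obtain ⟨c, -, hc⟩ := isUnit_iff_eq_C_of_isReduced.mp u.isUnit
  exact ⟨c, by rw [hc, smul_eq_C_mul, mul_comm]⟩

theorem IsHomogeneous.eq_zero_of_forall_dvd {ι : Type*} [Fintype ι] {G : MvPolynomial σ K}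
    {n : ℕ} (hG : G.IsHomogeneous n) (hn : n < Fintype.card ι) {l : ι → MvPolynomial σ K}
    (hl : ∀ i, (l i).IsHomogeneous 1) (hl0 : ∀ i, l i ≠ 0)
    (hna : Pairwise fun i j => ¬Associated (l i) (l j)) (hdvd : ∀ i, l i ∣ G) : G = 0 := by
  by_contra hG0
  obtain ⟨k, hk⟩ := Finset.univ.prod_dvd_of_prime_of_not_associated
    (fun i _ => prime_of_isHomogeneous_one (hl i) (hl0 i)) (hna.set_pairwise _)
    fun i _ => hdvd i
  have hprod := IsHomogeneous.prod Finset.univ l (fun _ => 1) fun i _ => hl i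
  simp only [Finset.sum_const, smul_eq_mul, mul_one, Finset.card_univ] at hprod
  have hprod0 : ∏ i, l i ≠ 0 := Finset.prod_ne_zero_iff.mpr fun i _ => hl0 i
  have hk0 : k ≠ 0 := by rintro rfl; exact hG0 (by simpa using hk)
  have := congrArg MvPolynomial.totalDegree hk
  rw [hG.totalDegree hG0, totalDegree_mul_of_isDomain hprod0 hk0,
    hprod.totalDegree hprod0] at this
  omega

end LinearForms

theorem IsHomogeneous.exists_eval_eq_zero {σ K : Type*} [Field K] [IsAlgClosed K] [Finite σ]
    [Nontrivial σ] {p : MvPolynomial σ K} {n : ℕ} (hp : p.IsHomogeneous n) (hn : n ≠ 0) :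
    ∃ v ≠ 0, eval v p = 0 := by
  classical
  obtain ⟨i, j, hij⟩ := exists_pair_ne σ
  by_cases hj : eval (Pi.single j 1) p = 0
  · exact ⟨Pi.single j 1, by simp, hj⟩
  have hg : lineRestriction (Pi.single i 1) (Pi.single j (1 : K)) p =
      (lineRestriction X (C ∘ Pi.single j 1) p).map
        (MvPolynomial.aeval (R := K) (Pi.single i (1 : K)) : MvPolynomial σ K →+* K) := by
    rw [map_lineRestriction]
    congr <;> funext k <;> simp
  set g := lineRestriction (Pi.single i 1) (Pi.single j (1 : K)) p
  have hgn : g.coeff n ≠ 0 := by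
    simpa [hg, Polynomial.coeff_map, hp.coeff_lineRestriction_self] using hj
  have hdeg : g.degree ≠ 0 := by
    have := Polynomial.le_natDegree_of_ne_zero hgn
    rw [Polynomial.degree_eq_natDegree (fun h => hgn (by simp [h]))]
    exact_mod_cast (Nat.pos_of_ne_zero hn).trans_le this |>.ne'
  obtain ⟨t, ht⟩ := IsAlgClosed.exists_root g hdeg
  refine ⟨fun k => (Pi.single i 1 : σ → K) k + t * (Pi.single j 1 : σ → K) k, fun h => ?_,
    ?_⟩
  · simpa [hij] using congrFun h i
  · have := eval_lineRestriction (Pi.single i 1) (Pi.single j (1 : K)) p t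
    rw [ht.eq_zero] at this
    exact this.symm

section ConcurrentLines

variable {σ K : Type*} [Field K] [Fintype σ] {ι : Type*} [Fintype ι] {l : ι → MvPolynomial σ K}
  {F : MvPolynomial σ K} {P : σ → K}

theorem eval_pderiv_eq_zero_of_forall_dvd_sub_sq (hF : eval P F = 0)
    (hcard : 1 < Fintype.card ι) (hl : ∀ i, (l i).IsHomogeneous 1) (hl0 : ∀ i, l i ≠ 0)
    (hna : Pairwise fun i j => ¬Associated (l i) (l j)) (hP : ∀ i, eval P (l i) = 0)
    (hsq : ∀ i, ∃ q, l i ∣ F - q ^ 2) (j : σ) : eval P (pderiv j F) = 0 := by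
  classical
  set D := ∑ k, X k * C (eval P (pderiv k F))
  have hD : (lineRestriction (C ∘ P) X F).coeff 1 = D := by
    rw [coeff_one_lineRestriction]
    exact Finset.sum_congr rfl fun k _ => by rw [aeval_C_comp]
  have hD0 : D = 0 := by
    refine IsHomogeneous.eq_zero_of_forall_dvd (n := 1) ?_ hcard hl hl0 hna fun i => ?_
    · exact IsHomogeneous.sum _ _ _ fun k _ => by
        simpa [mul_comm] using isHomogeneous_C_mul_X (eval P (pderiv k F)) k
    obtain ⟨q, hq⟩ := hsq i
    have hprime := (Ideal.span_singleton_prime (hl0 i)).mpr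
      (prime_of_isHomogeneous_one (hl i) (hl0 i))
    have hmap := map_mk_lineRestriction_eq_sq (hl i) hq (y := C ∘ P) (w := X)
      (by rw [aeval_C_comp, hP i, map_zero]; exact dvd_zero _) (by rw [aeval_X_left_apply])
    have h0 := congrArg (Polynomial.coeff · 0) hmap
    have h1 := congrArg (Polynomial.coeff · 1) hmap
    simp only [Polynomial.coeff_sq_zero, Polynomial.coeff_sq_one, Polynomial.coeff_map,
      coeff_zero_lineRestriction, aeval_C_comp, hD] at h0 h1
    rw [hF, map_zero, map_zero, eq_comm, pow_eq_zero_iff two_ne_zero] at h0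
    rw [← Ideal.Quotient.eq_zero_iff_dvd, h1, h0, mul_zero, zero_mul]
  simpa [D, Pi.single_apply] using congrArg (eval (Pi.single j 1)) hD0

theorem exists_C_mul_eq_sq_of_forall_dvd_sub_sq (hF : F.IsHomogeneous 4)
    (hcard : 4 < Fintype.card ι) (hl : ∀ i, (l i).IsHomogeneous 1) (hl0 : ∀ i, l i ≠ 0)
    (hna : Pairwise fun i j => ¬Associated (l i) (l j)) (hP : ∀ i, eval P (l i) = 0)
    (hsq : ∀ i, ∃ q, q.IsHomogeneous 2 ∧ l i ∣ F - q ^ 2) :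
    ∃ u : MvPolynomial σ K, u.IsHomogeneous 2 ∧ C (64 * eval P F ^ 3) * F = u ^ 2 := by
  set g := lineRestriction X (C ∘ P) F
  have hg0 : g.coeff 0 = F := by simp [g, coeff_zero_lineRestriction]
  have hg4 : g.coeff 4 = C (eval P F) := hF.coeff_lineRestriction_self P
  have hg2 : (g.coeff 2).IsHomogeneous 2 := hF.coeff_lineRestriction_isHomogeneous P rfl
  have hg3 : (g.coeff 3).IsHomogeneous 1 := hF.coeff_lineRestriction_isHomogeneous P rfl
  set u := C (4 * eval P F) * g.coeff 2 - g.coeff 3 ^ 2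
  have hu : u.IsHomogeneous 2 := (hg2.C_mul _).sub (hg3.pow 2)
  refine ⟨u, hu, sub_eq_zero.mp ?_⟩
  refine IsHomogeneous.eq_zero_of_forall_dvd ((hF.C_mul _).sub (hu.pow 2)) hcard hl hl0 hna
    fun i => ?_
  obtain ⟨q, hq2, hq⟩ := hsq i
  have hmap := map_mk_lineRestriction_eq_sq (hl i) hq (y := X) (w := C ∘ P) (by simp)
    (by rw [aeval_C_comp, hP i, map_zero]; exact dvd_zero _)
  have hinv := Polynomial.quartic_invariant_sq
    (g := (lineRestriction X (C ∘ P) q).map (Ideal.Quotient.mk (Ideal.span {l i})))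
    (Polynomial.natDegree_map_le.trans (hq2.natDegree_lineRestriction_le P))
  simp only [← hmap, Polynomial.coeff_map] at hinv
  rw [hg0, hg4] at hinv
  rw [← Ideal.Quotient.eq_zero_iff_dvd]
  simp only [u, map_sub, map_mul, map_pow, map_ofNat]
  linear_combination hinv

theorem exists_eval_pderiv_eq_zero_of_C_mul_eq_sq [IsAlgClosed K] [Nontrivial σ]
    {u : MvPolynomial σ K} {c : K} (hc : c ≠ 0) (hu : u.IsHomogeneous 2) (h : C c * F = u ^ 2) :
    ∃ v ≠ 0, ∀ j, eval v (pderiv j F) = 0 := by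
  obtain ⟨v, hv0, hv⟩ := hu.exists_eval_eq_zero two_ne_zero
  refine ⟨v, hv0, fun j => ?_⟩
  have := congrArg (fun p => eval v (pderiv j p)) h
  simpa [pderiv_C_mul, Derivation.leibniz_pow, hv, hc] using this

end ConcurrentLines

end MvPolynomial

/-- At most four bitangents of a smooth ternary quartic can intersect in a common
point: there is no nonzero point of `ℂ³` at which five pairwise non-proportional
bitangents all vanish. -/
theorem at_most_four_concurrent_bitangents
    (f : MvPolynomial (Fin 3) ℝ) (hhom : f.IsHomogeneous 4) (hsm : IsSmooth f) :
    ¬ ∃ l : Fin 5 → MvPolynomial (Fin 3) ℂ,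
        (∀ i, IsBitangent f (l i)) ∧
        (∀ i j, i ≠ j → ¬ ∃ c : ℂ, l i = c • l j) ∧
        ∃ P : Fin 3 → ℂ, P ≠ 0 ∧ ∀ i, eval P (l i) = 0 := by
  rintro ⟨l, hbit, hnp, P, hP0, hP⟩
  set F := map (algebraMap ℝ ℂ) f
  have hl (i : Fin 5) : (l i).IsHomogeneous 1 := (hbit i).2.1
  have hl0 (i : Fin 5) : l i ≠ 0 := (hbit i).1
  have hna : Pairwise fun i j => ¬Associated (l i) (l j) := fun i j hij h =>
    hnp j i hij.symm (exists_smul_eq_of_associated h)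
  have hsq (i : Fin 5) : ∃ q, q.IsHomogeneous 2 ∧ l i ∣ F - q ^ 2 := by
    obtain ⟨-, -, q, h, hq, -, hfq⟩ := hbit i
    exact ⟨q, hq, h, by simp only [F, hfq]; ring⟩
  by_cases hFP : eval P F = 0
  · exact hP0 (hsm P (eval_pderiv_eq_zero_of_forall_dvd_sub_sq hFP (by simp) hl hl0 hna hP
      fun i => (hsq i).imp fun _ => And.right))
  · obtain ⟨u, hu, hFu⟩ :=
      exists_C_mul_eq_sq_of_forall_dvd_sub_sq (hhom.map _) (by simp) hl hl0 hna hP hsq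
    obtain ⟨v, hv0, hv⟩ := exists_eval_pderiv_eq_zero_of_C_mul_eq_sq
      (mul_ne_zero (by norm_num) (pow_ne_zero 3 hFP)) hu hFu
    exact hv0 (hsm v hv)
end
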